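/- (Deep cactus chains contain a degenerate cycle) Let X₁,…,X_n ∈ ℤ∞^{S×S} be stable-cycle matrices such that for every 1 ≤ i < n there exist matrices U_i, V_i ∈ ℤ∞^{S×S} with X_i = U_i·stab(X_{i+1})·V_i (min-plus products). If n > |S|, then X_i is degenerate for some 1 ≤ i ≤ n. -/
import Mathlib


/-- `ℤ∞ = ℤ ∪ {∞}`. -/
abbrev ZInf : Type := WithTop ℤ

/-- `𝔫 = |S|!`. -/
def nfac (S : Type*) [Fintype S] : ℕ := (Fintype.card S).factorial

/-- `𝔪 = |S| ⬝ 𝔫`. -/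
def mfac (S : Type*) [Fintype S] : ℕ := Fintype.card S * nfac S

/-- The `(s, r)` entry of a min-plus matrix, as an element of `ℤ∞`.
Matrices over `Tropical ZInf` are multiplied in the min-plus (tropical) semiring:
`(A * B) s r = min_t (A s t + B t r)`, and `A ^ n` is the `n`-fold min-plus power. -/
def en {S : Type*} (A : Matrix S S (Tropical ZInf)) (s r : S) : ZInf :=
  (A s r).untrop

/-- `A` is a stable-cycle matrix with baseline `s₀`: for every `n ≥ 1`, `(A^n)_{s₀,s₀} = 0`
and `(A^n)_{r,r} ≥ 0` for every `r`. -/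
def IsStableCycle {S : Type*} [Fintype S] [DecidableEq S]
    (A : Matrix S S (Tropical ZInf)) (s₀ : S) : Prop :=
  ∀ n : ℕ, 1 ≤ n → en (A ^ n) s₀ s₀ = 0 ∧ ∀ r : S, 0 ≤ en (A ^ n) r r

/-- `MinStates B = {r : B_{r,r} = 0}`. -/
def MinStates {S : Type*} (B : Matrix S S (Tropical ZInf)) : Set S :=
  {r | en B r r = 0}

/-- `RefStates B = {r : B_{r,r} < ∞}`. -/
def RefStates {S : Type*} (B : Matrix S S (Tropical ZInf)) : Set S :=
  {r | en B r r < ⊤}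

/-- `(s, r)` is a grounded pair for `A` if there is `g ∈ MinStates (A^𝔪)` with
`(A^𝔪)_{s,g} < ∞` and `(A^𝔪)_{g,r} < ∞`. -/
def GrnPairs {S : Type*} [Fintype S] [DecidableEq S] (A : Matrix S S (Tropical ZInf)) :
    Set (S × S) :=
  {p | ∃ g ∈ MinStates (A ^ mfac S),
      en (A ^ mfac S) p.1 g < ⊤ ∧ en (A ^ mfac S) g p.2 < ⊤}

/-- `g` is a grounding state of the pair `(s, r)`: it is in `MinStates (A^𝔪)`, has finite
entries `(A^𝔪)_{s,g}, (A^𝔪)_{g,r}`, and minimizes `(A^𝔪)_{s,g} + (A^𝔪)_{g,r}` among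
all states of `MinStates (A^𝔪)`. -/
def IsGroundingState {S : Type*} [Fintype S] [DecidableEq S]
    (A : Matrix S S (Tropical ZInf)) (s r g : S) : Prop :=
  g ∈ MinStates (A ^ mfac S) ∧
  en (A ^ mfac S) s g < ⊤ ∧ en (A ^ mfac S) g r < ⊤ ∧
  ∀ g' ∈ MinStates (A ^ mfac S),
    en (A ^ mfac S) s g + en (A ^ mfac S) g r ≤
      en (A ^ mfac S) s g' + en (A ^ mfac S) g' r

/-- The stabilization `stab A`: its `(s, r)` entry is `(A^𝔪)_{s,g} + (A^𝔪)_{g,r}` where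
`g` is a grounding state of `(s, r)` if `(s, r)` is a grounded pair, and `∞` otherwise
(equivalently, the minimum of `(A^𝔪)_{s,g} + (A^𝔪)_{g,r}` over `g ∈ MinStates (A^𝔪)`). -/
noncomputable def stab {S : Type*} [Fintype S] [DecidableEq S]
    (A : Matrix S S (Tropical ZInf)) : Matrix S S (Tropical ZInf) :=
  Matrix.of fun s r =>
    Tropical.trop <|
      Finset.univ.inf fun g : S =>
        if en (A ^ mfac S) g g = 0 then en (A ^ mfac S) s g + en (A ^ mfac S) g r
        else ⊤

/-- A stable-cycle matrix `A` is degenerate if for every `s` and every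
`t ∈ RefStates (A^{2𝔪})`, whenever `(A^{2𝔪⬝k})_{s,t} < ∞` for some `k ≥ 1`, the pair
`(s, t)` is grounded. -/
def Degenerate {S : Type*} [Fintype S] [DecidableEq S]
    (A : Matrix S S (Tropical ZInf)) : Prop :=
  ∀ s t : S, t ∈ RefStates (A ^ (2 * mfac S)) →
    (∃ k : ℕ, 1 ≤ k ∧ en (A ^ (2 * mfac S * k)) s t < ⊤) → (s, t) ∈ GrnPairs A

section Infra

variable {S : Type*} [Fintype S] [DecidableEq S]

lemma en_mul (A B : Matrix S S (Tropical ZInf)) (s r : S) :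
    en (A * B) s r = Finset.univ.inf fun t => en A s t + en B t r := by
  show ((A * B) s r).untrop = _
  rw [Matrix.mul_apply, Finset.untrop_sum']
  congr 1

lemma zinf_zero_lt_top : (0 : ZInf) < ⊤ := by
  exact_mod_cast WithTop.coe_lt_top (0 : ℤ)

lemma en_mul_le (A B : Matrix S S (Tropical ZInf)) (s t r : S) :
    en (A * B) s r ≤ en A s t + en B t r := by
  rw [en_mul]
  exact Finset.inf_le (Finset.mem_univ t)

lemma en_mul_lt_top {A B : Matrix S S (Tropical ZInf)} {s r : S}
    (h : en (A * B) s r < ⊤) : ∃ t, en A s t < ⊤ ∧ en B t r < ⊤ := by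
  rw [en_mul, Finset.inf_lt_iff] at h
  obtain ⟨t, -, ht⟩ := h
  exact ⟨t, WithTop.add_lt_top.1 ht⟩

lemma fin_mul {A B : Matrix S S (Tropical ZInf)} {s t r : S}
    (h1 : en A s t < ⊤) (h2 : en B t r < ⊤) : en (A * B) s r < ⊤ :=
  lt_of_le_of_lt (en_mul_le A B s t r) (WithTop.add_lt_top.2 ⟨h1, h2⟩)

lemma fin_pow_mul {A : Matrix S S (Tropical ZInf)} {a b : ℕ} {s t r : S}
    (h1 : en (A ^ a) s t < ⊤) (h2 : en (A ^ b) t r < ⊤) :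
    en (A ^ (a + b)) s r < ⊤ := by
  rw [pow_add]
  exact fin_mul h1 h2

lemma en_one (x y : S) : en (1 : Matrix S S (Tropical ZInf)) x y
    = if x = y then 0 else ⊤ := by
  show ((1 : Matrix S S (Tropical ZInf)) x y).untrop = _
  rw [Matrix.one_apply]
  split
  · exact Tropical.untrop_one
  · exact Tropical.untrop_zero

/-- a walk of length `L` in the finiteness graph of `A` -/
def IsWalk (A : Matrix S S (Tropical ZInf)) (L : ℕ) (w : ℕ → S) : Prop :=
  ∀ i, i < L → en A (w i) (w (i + 1)) < ⊤

lemma fin_pow_iff_walk (A : Matrix S S (Tropical ZInf)) (L : ℕ) (x y : S) :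
    en (A ^ L) x y < ⊤ ↔ ∃ w : ℕ → S, w 0 = x ∧ w L = y ∧ IsWalk A L w := by
  induction L generalizing y with
  | zero =>
    rw [pow_zero, en_one]
    constructor
    · intro h
      split at h
      · subst ‹x = y›
        exact ⟨fun _ => x, rfl, rfl, fun i hi => absurd hi (Nat.not_lt_zero i)⟩
      · exact absurd h (lt_irrefl ⊤)
    · rintro ⟨w, h0, hL, -⟩
      have : x = y := h0 ▸ hL
      simp [this, zinf_zero_lt_top]
  | succ L ih =>
    rw [pow_succ]
    constructor
    · intro h
      obtain ⟨t, h1, h2⟩ := en_mul_lt_top h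
      obtain ⟨w, hw0, hwL, hwalk⟩ := (ih t).1 h1
      refine ⟨fun i => if i ≤ L then w i else y, by simpa using hw0, by simp, ?_⟩
      intro i hi
      rcases Nat.lt_or_ge i L with hiL | hiL
      · simpa [Nat.le_of_lt hiL, Nat.succ_le_of_lt hiL] using hwalk i hiL
      · have hiL' : i = L := by omega
        subst hiL'
        simpa [hwL] using h2
    · rintro ⟨w, hw0, hwL, hwalk⟩
      have h1 : en (A ^ L) x (w L) < ⊤ :=
        (ih (w L)).2 ⟨w, hw0, rfl, fun i hi => hwalk i (Nat.lt_succ_of_lt hi)⟩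
      have h2 : en A (w L) y < ⊤ := hwL ▸ hwalk L (Nat.lt_succ_self L)
      exact fin_mul h1 h2

lemma walk_remove {A : Matrix S S (Tropical ZInf)} {L : ℕ} {w : ℕ → S}
    (hw : IsWalk A L w) {p q : ℕ} (hpq : p < q) (hqL : q ≤ L) (heq : w p = w q) :
    ∃ w' : ℕ → S, w' 0 = w 0 ∧ w' (L - (q - p)) = w L ∧ IsWalk A (L - (q - p)) w' := by
  refine ⟨fun i => if i ≤ p then w i else w (i + (q - p)), by simp, ?_, ?_⟩
  · show (if L - (q - p) ≤ p then w (L - (q - p)) else w (L - (q - p) + (q - p))) = w L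
    by_cases h : L - (q - p) ≤ p
    · have hLq : L = q := by omega
      rw [if_pos h, show L - (q - p) = p by omega, heq, hLq]
    · rw [if_neg h, show L - (q - p) + (q - p) = L by omega]
  · intro i hi
    show en A (if i ≤ p then w i else w (i + (q - p)))
        (if i + 1 ≤ p then w (i + 1) else w (i + 1 + (q - p))) < ⊤
    rcases Nat.lt_or_ge i p with h1 | h1
    · rw [if_pos (by omega), if_pos (by omega)]
      exact hw i (by omega)
    · rcases Nat.eq_or_lt_of_le h1 with h2 | h2
      · rw [if_pos (by omega), if_neg (by omega),
          show w i = w q from by rw [← h2]; exact heq,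
          show i + 1 + (q - p) = q + 1 by omega]
        exact hw q (by omega)
      · rw [if_neg (by omega), if_neg (by omega),
          show i + 1 + (q - p) = i + (q - p) + 1 by omega]
        exact hw (i + (q - p)) (by omega)

lemma walk_insert_once {A : Matrix S S (Tropical ZInf)} {L : ℕ} {w : ℕ → S}
    (hw : IsWalk A L w) {p q : ℕ} (hpq : p < q) (hqL : q ≤ L) (heq : w p = w q) :
    ∃ w' : ℕ → S, w' 0 = w 0 ∧ w' (L + (q - p)) = w L ∧ IsWalk A (L + (q - p)) w'
      ∧ w' p = w p ∧ w' q = w q := by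
  refine ⟨fun i => if i ≤ q then w i else w (i - (q - p)), by simp, ?_, ?_,
    by simp [Nat.le_of_lt hpq], by simp⟩
  · show (if L + (q - p) ≤ q then w (L + (q - p)) else w (L + (q - p) - (q - p))) = w L
    rw [if_neg (by omega), show L + (q - p) - (q - p) = L by omega]
  · intro i hi
    show en A (if i ≤ q then w i else w (i - (q - p)))
        (if i + 1 ≤ q then w (i + 1) else w (i + 1 - (q - p))) < ⊤
    rcases Nat.lt_or_ge i q with h1 | h1
    · rw [if_pos (by omega), if_pos (by omega)]
      exact hw i (by omega)
    · rcases Nat.eq_or_lt_of_le h1 with h2 | h2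
      · rw [if_pos (by omega), if_neg (by omega),
          show w i = w p from by rw [← h2]; exact heq.symm,
          show i + 1 - (q - p) = p + 1 by omega]
        exact hw p (by omega)
      · rw [if_neg (by omega), if_neg (by omega),
          show i + 1 - (q - p) = i - (q - p) + 1 by omega]
        exact hw (i - (q - p)) (by omega)

lemma walk_pump {A : Matrix S S (Tropical ZInf)} {p q : ℕ} (hpq : p < q) :
    ∀ (k : ℕ) (L : ℕ) (w : ℕ → S), IsWalk A L w → q ≤ L → w p = w q →
      ∃ w' : ℕ → S, w' 0 = w 0 ∧ w' (L + k * (q - p)) = w L ∧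
        IsWalk A (L + k * (q - p)) w' := by
  intro k
  induction k with
  | zero =>
    intro L w hw hqL heq
    exact ⟨w, rfl, by simp, by simpa using hw⟩
  | succ k ih =>
    intro L w hw hqL heq
    obtain ⟨w', h0, hL, hwalk, hp, hq⟩ := walk_insert_once hw hpq hqL heq
    obtain ⟨w'', h0', hL', hwalk'⟩ := ih (L + (q - p)) w' hwalk (by omega)
      (by rw [hp, hq, heq])
    have harith : L + (k + 1) * (q - p) = L + (q - p) + k * (q - p) := by ring
    exact ⟨w'', by rw [h0', h0], by rw [harith, hL', hL], by rw [harith]; exact hwalk'⟩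

lemma exists_repeat (w : ℕ → S) (N : ℕ) (hN : Fintype.card S ≤ N) :
    ∃ p q, p < q ∧ q ≤ N ∧ w p = w q := by
  obtain ⟨a, b, hab, heq⟩ := Fintype.exists_ne_map_eq_of_card_lt
    (fun i : Fin (N + 1) => w i) (by simpa using Nat.lt_succ_of_le hN)
  rcases Nat.lt_or_ge (a : ℕ) (b : ℕ) with h | h
  · exact ⟨a, b, h, Nat.lt_succ_iff.1 b.isLt, heq⟩
  · have h' : (b : ℕ) < (a : ℕ) := by
      rcases Nat.eq_or_lt_of_le h with h2 | h2
      · exact absurd (Fin.ext h2.symm) hab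
      · exact h2
    exact ⟨b, a, h', Nat.lt_succ_iff.1 a.isLt, heq.symm⟩

lemma exists_repeat_mod (w : ℕ → S) (hS : 1 ≤ Fintype.card S) :
    ∃ p q, p < q ∧ q ≤ mfac S ∧ w p = w q ∧ nfac S ∣ (q - p) := by
  classical
  -- some value u has at least (nfac S) + 1 occurrences among positions 0..mfac S
  obtain ⟨u, -, hu⟩ := Finset.exists_lt_card_fiber_of_mul_lt_card_of_maps_to
    (s := Finset.range (mfac S + 1)) (t := (Finset.univ : Finset S)) (f := w)
    (fun a _ => Finset.mem_univ (w a))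
    (by
      rw [Finset.card_range, Finset.card_univ]
      calc Fintype.card S * nfac S = mfac S := rfl
        _ < mfac S + 1 := Nat.lt_succ_self _)
  set F := (Finset.range (mfac S + 1)).filter (fun a => w a = u) with hF
  -- two positions in F congruent mod nfac S
  have hnpos : 0 < nfac S := Nat.factorial_pos _
  obtain ⟨p, hp, q, hq, hne, hmod⟩ := Finset.exists_ne_map_eq_of_card_lt_of_maps_to
    (t := Finset.range (nfac S)) (by simpa using hu)
    (f := fun a => a % nfac S) (fun a _ => Finset.mem_range.2 (Nat.mod_lt a hnpos))
  have hwp : w p = u := (Finset.mem_filter.1 hp).2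
  have hwq : w q = u := (Finset.mem_filter.1 hq).2
  have hpr : p ≤ mfac S := Nat.lt_succ_iff.1 (Finset.mem_range.1 (Finset.mem_filter.1 hp).1)
  have hqr : q ≤ mfac S := Nat.lt_succ_iff.1 (Finset.mem_range.1 (Finset.mem_filter.1 hq).1)
  rcases Nat.lt_or_ge p q with h | h
  · refine ⟨p, q, h, hqr, by rw [hwp, hwq], ?_⟩
    exact (Nat.modEq_iff_dvd' (Nat.le_of_lt h)).1 hmod
  · have h' : q < p := by
      rcases Nat.eq_or_lt_of_le h with h2 | h2
      · exact absurd h2.symm hne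
      · exact h2
    refine ⟨q, p, h', hpr, by rw [hwp, hwq], ?_⟩
    exact (Nat.modEq_iff_dvd' (Nat.le_of_lt h')).1 hmod.symm

lemma nfac_dvd_mfac : nfac S ∣ mfac S := dvd_mul_left _ _

lemma mfac_pos (hS : 1 ≤ Fintype.card S) : 1 ≤ mfac S :=
  Nat.mul_pos hS (Nat.factorial_pos _)

/-- The key removal/insertion lemma: reachability at any positive length divisible by
`nfac S` implies reachability at length exactly `mfac S`. -/
lemma reach_mfac (A : Matrix S S (Tropical ZInf)) (hS : 1 ≤ Fintype.card S) :
    ∀ L : ℕ, ∀ x y : S, nfac S ∣ L → 1 ≤ L → en (A ^ L) x y < ⊤ →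
      en (A ^ mfac S) x y < ⊤ := by
  intro L
  induction L using Nat.strong_induction_on with
  | _ L ih =>
    intro x y hdvd hL1 h
    rcases lt_trichotomy L (mfac S) with hlt | heq | hgt
    · -- insertion case
      obtain ⟨w, h0, hL, hwalk⟩ := (fin_pow_iff_walk A L x y).1 h
      have hcardL : Fintype.card S ≤ L := by
        have h1 : Fintype.card S ≤ nfac S := Nat.self_le_factorial _
        have h2 : nfac S ≤ L := Nat.le_of_dvd hL1 hdvd
        omega
      obtain ⟨p, q, hpq, hqN, heqw⟩ := exists_repeat w (Fintype.card S) le_rfl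
      have hqL : q ≤ L := le_trans hqN hcardL
      have hcdvd : (q - p) ∣ nfac S := Nat.dvd_factorial (by omega) (by omega)
      have hdvd2 : (q - p) ∣ (mfac S - L) :=
        hcdvd.trans (Nat.dvd_sub nfac_dvd_mfac hdvd)
      obtain ⟨w', h0', hL', hwalk'⟩ := walk_pump hpq ((mfac S - L) / (q - p)) L w hwalk hqL heqw
      have hlen : L + (mfac S - L) / (q - p) * (q - p) = mfac S := by
        rw [Nat.div_mul_cancel hdvd2]
        omega
      rw [hlen] at hL' hwalk'
      exact (fin_pow_iff_walk A (mfac S) x y).2 ⟨w', by rw [h0', h0], by rw [hL', hL], hwalk'⟩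
    · subst heq; exact h
    · -- removal case
      obtain ⟨w, h0, hL, hwalk⟩ := (fin_pow_iff_walk A L x y).1 h
      obtain ⟨p, q, hpq, hqm, heqw, hdvdpq⟩ := exists_repeat_mod w hS
      have hqL : q ≤ L := le_trans hqm (Nat.le_of_lt hgt)
      obtain ⟨w', h0', hL', hwalk'⟩ := walk_remove hwalk hpq hqL heqw
      have hfin : en (A ^ (L - (q - p))) x y < ⊤ :=
        (fin_pow_iff_walk A (L - (q - p)) x y).2
          ⟨w', by rw [h0', h0], by rw [hL', hL], hwalk'⟩
      exact ih (L - (q - p)) (by omega) x y (Nat.dvd_sub hdvd hdvdpq) (by omega) hfin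

end Infra

section Step

variable {S : Type*} [Fintype S] [DecidableEq S]

/-- The main step lemma: if `A = U ⬝ stab B ⬝ V` and `A` is non-degenerate, then any set of
pairwise non-communicating min-states of `A` can be enlarged by one into such a set for `B`. -/
lemma step_lemma (A B U V : Matrix S S (Tropical ZInf)) (hS : 1 ≤ Fintype.card S)
    (hAB : A = U * stab B * V) (hnd : ¬ Degenerate A)
    (T : Finset S) (hT0 : ∀ g ∈ T, en (A ^ mfac S) g g = 0)
    (hT1 : ∀ g ∈ T, ∀ g' ∈ T, g ≠ g' →
      ¬(en (A ^ mfac S) g g' < ⊤ ∧ en (A ^ mfac S) g' g < ⊤)) :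
    ∃ T' : Finset S, T.card + 1 ≤ T'.card ∧ (∀ g ∈ T', en (B ^ mfac S) g g = 0) ∧
      (∀ g ∈ T', ∀ g' ∈ T', g ≠ g' →
        ¬(en (B ^ mfac S) g g' < ⊤ ∧ en (B ^ mfac S) g' g < ⊤)) := by
  classical
  set m := mfac S with hm
  set M := B ^ m with hM
  set P : Matrix S S (Tropical ZInf) :=
    Matrix.of (fun a h => if en M h h = 0 then M a h else 0) with hP
  set Q : Matrix S S (Tropical ZInf) :=
    Matrix.of (fun h b => if en M h h = 0 then M h b else 0) with hQ
  have hstab : stab B = P * Q := by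
    apply Matrix.ext
    intro s r
    apply Tropical.untrop_injective
    have e0 : (stab B) s r = Tropical.trop (Finset.univ.inf fun g : S =>
        if en (B ^ mfac S) g g = 0 then en (B ^ mfac S) s g + en (B ^ mfac S) g r else ⊤) := rfl
    rw [e0, Tropical.untrop_trop,
      show Tropical.untrop ((P * Q) s r) = en (P * Q) s r from rfl, en_mul, ← hm]
    apply Finset.inf_congr rfl
    intro g _
    by_cases hg : en M g g = 0
    · rw [if_pos hg]
      have e1 : en P s g = en M s g := by
        show ((if en M g g = 0 then M s g else 0)).untrop = _
        rw [if_pos hg]; rfl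
      have e2 : en Q g r = en M g r := by
        show ((if en M g g = 0 then M g r else 0)).untrop = _
        rw [if_pos hg]; rfl
      rw [e1, e2]
    · rw [if_neg hg]
      have e1 : en P s g = ⊤ := by
        show ((if en M g g = 0 then M s g else 0)).untrop = ⊤
        rw [if_neg hg]; exact Tropical.untrop_zero
      rw [e1]
      exact (top_add _).symm
  set Lm : Matrix S S (Tropical ZInf) := U * P with hLm
  set Rm : Matrix S S (Tropical ZInf) := Q * V with hRm
  have hA : A = Lm * Rm := by
    rw [hAB, hstab, ← Matrix.mul_assoc U P Q, Matrix.mul_assoc (U * P) Q V]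
  have hpow : ∀ k : ℕ, A ^ (k + 1) = Lm * ((Rm * Lm) ^ k * Rm) := by
    intro k
    induction k with
    | zero => simpa [pow_zero, one_mul] using hA
    | succ k ih =>
      calc A ^ (k + 2) = A * A ^ (k + 1) := by rw [← pow_succ']
        _ = (Lm * Rm) * (Lm * ((Rm * Lm) ^ k * Rm)) := by rw [← hA, ih]
        _ = Lm * ((Rm * Lm) ^ (k + 1) * Rm) := by
            rw [pow_succ']
            noncomm_ring
  have hmpos : 1 ≤ m := mfac_pos hS
  have hmsub : m - 1 + 1 = m := Nat.succ_pred_eq_of_pos hmpos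
  -- membership of a finite L-entry target in the min-states of B, with access witness
  have hLfin : ∀ x h, en Lm x h < ⊤ → en M h h = 0 ∧ ∃ a, en U x a < ⊤ ∧ en M a h < ⊤ := by
    intro x h hfin
    obtain ⟨a, hU, hPa⟩ := en_mul_lt_top hfin
    by_cases hg : en M h h = 0
    · refine ⟨hg, a, hU, ?_⟩
      have : en P a h = en M a h := by
        show ((if en M h h = 0 then M a h else 0)).untrop = _
        rw [if_pos hg]; rfl
      rwa [this] at hPa
    · exfalso
      have : en P a h = ⊤ := by
        show ((if en M h h = 0 then M a h else 0)).untrop = ⊤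
        rw [if_neg hg]; exact Tropical.untrop_zero
      rw [this] at hPa
      exact absurd hPa (lt_irrefl ⊤)
  -- conversely, a bound for L entries through min-states of B
  have hLbound : ∀ x a h, en M h h = 0 → en U x a < ⊤ → en M a h < ⊤ → en Lm x h < ⊤ := by
    intro x a h hg hU hMa
    have : en P a h = en M a h := by
      show ((if en M h h = 0 then M a h else 0)).untrop = _
      rw [if_pos hg]; rfl
    exact fin_mul hU (by rwa [this])
  -- route extraction
  have route : ∀ x, en (A ^ m) x x < ⊤ →
      ∃ h, en M h h = 0 ∧ en Lm x h < ⊤ ∧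
        ∃ h'', en ((Rm * Lm) ^ (m - 1)) h h'' < ⊤ ∧ en Rm h'' x < ⊤ := by
    intro x hx
    rw [← hmsub, hpow (m - 1)] at hx
    obtain ⟨h, hLh, hrest⟩ := en_mul_lt_top hx
    obtain ⟨h'', h1, h2⟩ := en_mul_lt_top hrest
    exact ⟨h, (hLfin x h hLh).1, hLh, h'', h1, h2⟩
  -- the choice function
  set φ : S → S := fun x =>
    if hx : en (A ^ m) x x < ⊤ then (route x hx).choose else x with hφdef
  have hφ : ∀ x (hx : en (A ^ m) x x < ⊤),
      en M (φ x) (φ x) = 0 ∧ en Lm x (φ x) < ⊤ ∧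
        ∃ h'', en ((Rm * Lm) ^ (m - 1)) (φ x) h'' < ⊤ ∧ en Rm h'' x < ⊤ := by
    intro x hx
    have : φ x = (route x hx).choose := dif_pos hx
    rw [this]
    exact (route x hx).choose_spec
  -- transfer of L-finiteness along B-reachability between min-states
  have hLtrans : ∀ x h h', en M h' h' = 0 → en Lm x h < ⊤ → en M h h' < ⊤ →
      en Lm x h' < ⊤ := by
    intro x h h' hh' hLxh hMhh'
    obtain ⟨-, a, hU, hMa⟩ := hLfin x h hLxh
    have h2m : en (B ^ (m + m)) a h' < ⊤ := fin_pow_mul hMa hMhh'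
    have hM' : en (B ^ m) a h' < ⊤ :=
      reach_mfac B hS (m + m) a h'
        (by exact dvd_add nfac_dvd_mfac nfac_dvd_mfac) (by omega) h2m
    exact hLbound x a h' hh' hU hM'
  -- the hijack lemma
  have hij : ∀ x y (hx : en (A ^ m) x x < ⊤) (hy : en (A ^ m) y y < ⊤),
      en M (φ x) (φ y) < ⊤ → en (A ^ m) x y < ⊤ := by
    intro x y hx hy hMf
    obtain ⟨hy0, hLy, h'', hF, hR⟩ := hφ y hy
    have hLxy : en Lm x (φ y) < ⊤ := hLtrans x (φ x) (φ y) hy0 (hφ x hx).2.1 hMf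
    rw [← hmsub, hpow (m - 1)]
    exact fin_mul hLxy (fin_mul hF hR)
  -- extract the non-degeneracy witness
  rw [Degenerate] at hnd
  push_neg at hnd
  obtain ⟨s, t, htRef, ⟨k, hk1, hkfin⟩, hgrn⟩ := hnd
  have htt2 : en (A ^ (2 * m)) t t < ⊤ := htRef
  have htt : en (A ^ m) t t < ⊤ :=
    reach_mfac A hS (2 * m) t t (Dvd.dvd.mul_left nfac_dvd_mfac 2) (by omega) htt2
  have hTfin : ∀ g ∈ T, en (A ^ m) g g < ⊤ := by
    intro g hg
    rw [hT0 g hg]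
    exact zinf_zero_lt_top
  -- grounding helper: if t communicates with a min-state g of A, then (s,t) is grounded
  have ground : ∀ g, en (A ^ m) g g = 0 → en (A ^ m) t g < ⊤ → en (A ^ m) g t < ⊤ → False := by
    intro g hg0 htg hgt
    apply hgrn
    refine ⟨g, hg0, ?_, hgt⟩
    have h1 : en (A ^ (2 * m * k + m)) s g < ⊤ := fin_pow_mul hkfin htg
    exact reach_mfac A hS (2 * m * k + m) s g
      (dvd_add (Dvd.dvd.mul_right (Dvd.dvd.mul_left nfac_dvd_mfac 2) k) nfac_dvd_mfac)
      (by have := hmpos; omega) h1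
  -- freshness of φ t with respect to the images of T
  have hfresh : ∀ g ∈ T, ¬(en M (φ t) (φ g) < ⊤ ∧ en M (φ g) (φ t) < ⊤) := by
    rintro g hg ⟨d1, d2⟩
    exact ground g (hT0 g hg) (hij t g htt (hTfin g hg) d1) (hij g t (hTfin g hg) htt d2)
  have hreflM : ∀ x (hx : en (A ^ m) x x < ⊤), en M (φ x) (φ x) < ⊤ := by
    intro x hx
    rw [(hφ x hx).1]
    exact zinf_zero_lt_top
  have hinj : Set.InjOn φ T := by
    intro g hg g' hg' hEq
    by_contra hne
    apply hT1 g hg g' hg' hne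
    have h1 : en M (φ g) (φ g') < ⊤ := by rw [hEq]; exact hreflM g' (hTfin g' hg')
    have h2 : en M (φ g') (φ g) < ⊤ := by rw [hEq]; exact hreflM g' (hTfin g' hg')
    exact ⟨hij g g' (hTfin g hg) (hTfin g' hg') h1, hij g' g (hTfin g' hg') (hTfin g hg) h2⟩
  have hnotmem : φ t ∉ T.image φ := by
    intro hmem
    obtain ⟨g, hg, hEq⟩ := Finset.mem_image.1 hmem
    apply hfresh g hg
    constructor
    · rw [← hEq]; exact hreflM g (hTfin g hg)
    · rw [← hEq]; exact hreflM g (hTfin g hg)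
  refine ⟨insert (φ t) (T.image φ), ?_, ?_, ?_⟩
  · rw [Finset.card_insert_of_notMem hnotmem, Finset.card_image_of_injOn hinj]
  · intro h hh
    rcases Finset.mem_insert.1 hh with h1 | h1
    · subst h1; exact (hφ t htt).1
    · obtain ⟨g, hg, hEq⟩ := Finset.mem_image.1 h1
      subst hEq
      exact (hφ g (hTfin g hg)).1
  · intro h1 hh1 h2 hh2 hne hcomm
    rcases Finset.mem_insert.1 hh1 with e1 | e1 <;> rcases Finset.mem_insert.1 hh2 with e2 | e2
    · exact hne (e1.trans e2.symm)
    · obtain ⟨g, hg, hEq⟩ := Finset.mem_image.1 e2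
      subst e1; subst hEq
      exact hfresh g hg hcomm
    · obtain ⟨g, hg, hEq⟩ := Finset.mem_image.1 e1
      subst e2; subst hEq
      exact hfresh g hg ⟨hcomm.2, hcomm.1⟩
    · obtain ⟨g, hg, hEq⟩ := Finset.mem_image.1 e1
      obtain ⟨g', hg', hEq'⟩ := Finset.mem_image.1 e2
      subst hEq; subst hEq'
      have hgne : g ≠ g' := by
        intro hgg; exact hne (by rw [hgg])
      apply hT1 g hg g' hg' hgne
      exact ⟨hij g g' (hTfin g hg) (hTfin g' hg') hcomm.1,
        hij g' g (hTfin g' hg') (hTfin g hg) hcomm.2⟩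

end Step

/-- **Deep cactus chains contain a degenerate cycle**: if `X₁, …, Xₙ` are stable-cycle
matrices with `Xᵢ = Uᵢ ⬝ stab Xᵢ₊₁ ⬝ Vᵢ` for all `i < n`, and `n > |S|`, then some `Xᵢ` is
degenerate. -/
theorem deep_cactus_chain_has_degenerate {S : Type*} [Fintype S] [DecidableEq S]
    (n : ℕ) (X : Fin n → Matrix S S (Tropical ZInf)) (bl : Fin n → S)
    (hstable : ∀ i, IsStableCycle (X i) (bl i))
    (hchain : ∀ (i : ℕ) (h1 : i + 1 < n),
      ∃ U V : Matrix S S (Tropical ZInf),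
        X ⟨i, Nat.lt_of_succ_lt h1⟩ = U * stab (X ⟨i + 1, h1⟩) * V)
    (hn : Fintype.card S < n) :
    ∃ i : Fin n, Degenerate (X i) := by
  classical
  by_contra hdeg
  push_neg at hdeg
  have hn0 : 0 < n := by omega
  have hSne : Nonempty S := ⟨bl ⟨0, hn0⟩⟩
  have hS : 1 ≤ Fintype.card S := Fintype.card_pos
  have hmpos : 1 ≤ mfac S := mfac_pos hS
  have key : ∀ j : ℕ, ∀ hj : j < n, ∃ T : Finset S, j + 1 ≤ T.card ∧
      (∀ g ∈ T, en (X ⟨j, hj⟩ ^ mfac S) g g = 0) ∧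
      (∀ g ∈ T, ∀ g' ∈ T, g ≠ g' →
        ¬(en (X ⟨j, hj⟩ ^ mfac S) g g' < ⊤ ∧ en (X ⟨j, hj⟩ ^ mfac S) g' g < ⊤)) := by
    intro j
    induction j with
    | zero =>
      intro hj
      refine ⟨{bl ⟨0, hj⟩}, by simp, ?_, ?_⟩
      · intro g hg
        rw [Finset.mem_singleton.1 hg]
        exact (hstable ⟨0, hj⟩ (mfac S) hmpos).1
      · intro g hg g' hg' hne
        rw [Finset.mem_singleton.1 hg, Finset.mem_singleton.1 hg'] at hne
        exact absurd rfl hne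
    | succ j ihj =>
      intro hj
      have hj' : j < n := Nat.lt_of_succ_lt hj
      obtain ⟨T, hc, h0, h1⟩ := ihj hj'
      obtain ⟨U, V, hUV⟩ := hchain j hj
      obtain ⟨T', hc', h0', h1'⟩ := step_lemma (X ⟨j, hj'⟩) (X ⟨j + 1, hj⟩) U V hS
        hUV (hdeg ⟨j, hj'⟩) T h0 h1
      exact ⟨T', by omega, h0', h1'⟩
  obtain ⟨T, hc, -, -⟩ := key (n - 1) (by omega)
  have hle : T.card ≤ Fintype.card S := Finset.card_le_univ T
  omega
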